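/- arXiv:2402.00476 — 6 statements merged into one kernel-verified Lean document; each statement's English description precedes it below -/
import Mathlib

section
/- Let A and B be non-degenerate algebras and γ: A → M(B) a homomorphism such that γ(A)B = B and Bγ(A) = B. Then there exists a unique unital homomorphism γ₁: M(A) → M(B) extending γ. -/
open scoped TensorProduct

/-- The product of a non-unital algebra is non-degenerate. -/
def NonDeg (A : Type*) [Mul A] [Zero A] : Prop :=
  (∀ a : A, (∀ b : A, a * b = 0) → a = 0) ∧ (∀ b : A, (∀ a : A, a * b = 0) → b = 0)

/-- A multiplier of a non-unital algebra: a pair of linear maps `(l, r)` with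
`b * l a = r b * a` for all `a b`. -/
structure Multiplier (A : Type*) [NonUnitalNonAssocSemiring A] [Module ℂ A] where
  l : A →ₗ[ℂ] A
  r : A →ₗ[ℂ] A
  compat : ∀ a b : A, b * l a = r b * a

namespace Multiplier

variable {A : Type*}

section Basic
variable [NonUnitalNonAssocSemiring A] [Module ℂ A]

instance : Zero (Multiplier A) :=
  ⟨⟨0, 0, fun a b => by simp⟩⟩

instance : One (Multiplier A) :=
  ⟨⟨LinearMap.id, LinearMap.id, fun _ _ => rfl⟩⟩

instance : Add (Multiplier A) :=
  ⟨fun x y => ⟨x.l + y.l, x.r + y.r, fun a b => by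
    simp only [LinearMap.add_apply, mul_add, add_mul, x.compat, y.compat]⟩⟩

end Basic

section Assoc
variable [NonUnitalSemiring A] [Module ℂ A]

instance : Mul (Multiplier A) :=
  ⟨fun x y => ⟨x.l ∘ₗ y.l, y.r ∘ₗ x.r, fun a b => by
    simp only [LinearMap.comp_apply]
    rw [x.compat, y.compat]⟩⟩

variable [SMulCommClass ℂ A A] [IsScalarTower ℂ A A]

instance : SMul ℂ (Multiplier A) :=
  ⟨fun s x => ⟨s • x.l, s • x.r, fun a b => by
    simp only [LinearMap.smul_apply]
    rw [mul_smul_comm, smul_mul_assoc, x.compat]⟩⟩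

/-- The canonical embedding of `A` into its multiplier algebra. -/
def emb (c : A) : Multiplier A :=
  ⟨{ toFun := fun a => c * a
     map_add' := mul_add c
     map_smul' := fun s a => mul_smul_comm s c a },
   { toFun := fun b => b * c
     map_add' := fun a b => add_mul a b c
     map_smul' := fun s a => smul_mul_assoc s a c },
   fun a b => (mul_assoc b c a).symm⟩

end Assoc

end Multiplier

lemma mult_ext {A : Type*} [NonUnitalNonAssocSemiring A] [Module ℂ A]
    {x y : Multiplier A} (hl : x.l = y.l) (hr : x.r = y.r) : x = y := by
  cases x; cases y; simp_all

lemma liftAux {A B : Type*} [AddCommGroup A] [AddCommGroup B] [Module ℂ B]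
    (F G : A → B →ₗ[ℂ] B)
    (hFadd : ∀ a a', F (a + a') = F a + F a')
    (hGadd : ∀ a a', G (a + a') = G a + G a')
    (hspan : Submodule.span ℂ {x : B | ∃ a b, x = F a b} = ⊤)
    (hker : ∀ S : Finset (A × B), (∑ p ∈ S, F p.1 p.2 = 0) → ∑ p ∈ S, G p.1 p.2 = 0) :
    ∃ L : B →ₗ[ℂ] B, ∀ a b, L (F a b) = G a b := by
  classical
  let gF : A →ₗ[ℤ] B →ₗ[ℤ] B :=
    (AddMonoidHom.mk' (fun a => ((F a).restrictScalars ℤ))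
      (fun a a' => by ext b; simp [hFadd a a'])).toIntLinearMap
  let gG : A →ₗ[ℤ] B →ₗ[ℤ] B :=
    (AddMonoidHom.mk' (fun a => ((G a).restrictScalars ℤ))
      (fun a a' => by ext b; simp [hGadd a a'])).toIntLinearMap
  let πF : A ⊗[ℤ] B →ₗ[ℤ] B := TensorProduct.lift gF
  let πG : A ⊗[ℤ] B →ₗ[ℤ] B := TensorProduct.lift gG
  have hπF : ∀ (a : A) (b : B), πF (a ⊗ₜ b) = F a b := fun a b => rfl
  have hπG : ∀ (a : A) (b : B), πG (a ⊗ₜ b) = G a b := fun a b => rfl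
  have hsmul : ∀ (t : A ⊗[ℤ] B) (s : ℂ), ∃ t', πF t' = s • πF t ∧ πG t' = s • πG t := by
    intro t s
    induction t using TensorProduct.induction_on with
    | zero => exact ⟨0, by simp, by simp⟩
    | tmul a b => exact ⟨a ⊗ₜ (s • b), by simp [hπF], by simp [hπG]⟩
    | add x y hx hy =>
      obtain ⟨tx, hx1, hx2⟩ := hx
      obtain ⟨ty, hy1, hy2⟩ := hy
      exact ⟨tx + ty, by simp [hx1, hy1, smul_add], by simp [hx2, hy2, smul_add]⟩
  have hsurj : Function.Surjective πF := by
    intro x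
    have hx : x ∈ (⊤ : Submodule ℂ B) := trivial
    rw [← hspan] at hx
    induction hx using Submodule.span_induction with
    | mem x hxm => obtain ⟨a, b, rfl⟩ := hxm; exact ⟨a ⊗ₜ b, rfl⟩
    | zero => exact ⟨0, by simp⟩
    | add x y _ _ hx hy =>
      obtain ⟨tx, rfl⟩ := hx; obtain ⟨ty, rfl⟩ := hy
      exact ⟨tx + ty, by simp⟩
    | smul s x _ hx =>
      obtain ⟨t, rfl⟩ := hx
      obtain ⟨t', ht', _⟩ := hsmul t s
      exact ⟨t', ht'⟩
  have hker' : LinearMap.ker πF ≤ LinearMap.ker πG := by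
    intro t ht
    simp only [LinearMap.mem_ker] at ht ⊢
    obtain ⟨S, rfl⟩ := TensorProduct.exists_finset t
    have h1 : ∑ p ∈ S, F p.1 p.2 = 0 := by
      rw [← ht]; simp [map_sum, hπF]
    have h2 := hker S h1
    rw [map_sum]; simpa [hπG] using h2
  let e := πF.quotKerEquivOfSurjective hsurj
  have he : ∀ t : A ⊗[ℤ] B, e (Submodule.Quotient.mk t) = πF t := by
    intro t
    simp [e, LinearMap.quotKerEquivOfSurjective, LinearMap.quotKerEquivRange]
  let L₀ : B →ₗ[ℤ] B := (LinearMap.ker πF).liftQ πG hker' ∘ₗ e.symm.toLinearMap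
  have hL₀ : ∀ t : A ⊗[ℤ] B, L₀ (πF t) = πG t := by
    intro t
    have : e.symm (πF t) = Submodule.Quotient.mk t := by
      rw [← he t, LinearEquiv.symm_apply_apply]
    simp [L₀, this]
  have hL₀s : ∀ (s : ℂ) (x : B), L₀ (s • x) = s • L₀ x := by
    intro s x
    obtain ⟨t, rfl⟩ := hsurj x
    obtain ⟨t', h1, h2⟩ := hsmul t s
    rw [← h1, hL₀, h2, hL₀]
  refine ⟨{ toFun := L₀, map_add' := map_add L₀, map_smul' := hL₀s }, ?_⟩
  intro a b
  have := hL₀ (a ⊗ₜ b)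
  simpa [hπF, hπG] using this

/-- A non-degenerate homomorphism `γ : A → M(B)` (meaning `γ(A)B = B` and `Bγ(A) = B`)
extends uniquely to a unital homomorphism `γ₁ : M(A) → M(B)`. -/
theorem statement6 {A B : Type*}
    [NonUnitalRing A] [Module ℂ A] [SMulCommClass ℂ A A] [IsScalarTower ℂ A A]
    [NonUnitalRing B] [Module ℂ B] [SMulCommClass ℂ B B] [IsScalarTower ℂ B B]
    (hA : NonDeg A) (hB : NonDeg B)
    (γ : A → Multiplier B)
    (hadd : ∀ a a' : A, γ (a + a') = γ a + γ a')
    (hmul : ∀ a a' : A, γ (a * a') = γ a * γ a')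
    (hnd1 : Submodule.span ℂ {x : B | ∃ (a : A) (b : B), x = (γ a).l b} = ⊤)
    (hnd2 : Submodule.span ℂ {x : B | ∃ (a : A) (b : B), x = (γ a).r b} = ⊤) :
    ∃! γ₁ : Multiplier A → Multiplier B,
      (∀ x y : Multiplier A, γ₁ (x + y) = γ₁ x + γ₁ y) ∧
      (∀ x y : Multiplier A, γ₁ (x * y) = γ₁ x * γ₁ y) ∧
      γ₁ 1 = 1 ∧
      (∀ c : A, γ₁ (Multiplier.emb c) = γ c) := by
  classical
  -- key product identities
  have K1 : ∀ (c a : A) (d b : B), ((γ c).r d) * ((γ a).l b) = ((γ (c * a)).r d) * b := by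
    intro c a d b
    rw [(γ a).compat, hmul]; rfl
  have K2 : ∀ (a c : A) (b d : B), ((γ a).r b) * ((γ c).l d) = ((γ (a * c)).r b) * d := by
    intro a c b d
    rw [(γ c).compat, hmul]; rfl
  -- additivity of components
  have hladd : ∀ a a' : A, (γ (a + a')).l = (γ a).l + (γ a').l := by
    intro a a'; rw [hadd]; rfl
  have hradd : ∀ a a' : A, (γ (a + a')).r = (γ a).r + (γ a').r := by
    intro a a'; rw [hadd]; rfl
  -- construct L
  have hexL : ∀ m : Multiplier A, ∃ L : B →ₗ[ℂ] B, ∀ a b, L ((γ a).l b) = (γ (m.l a)).l b := by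
    intro m
    refine liftAux (fun a => (γ a).l) (fun a => (γ (m.l a)).l) hladd
      (fun a a' => by
        show (γ (m.l (a + a'))).l = (γ (m.l a)).l + (γ (m.l a')).l
        rw [map_add, hladd]) hnd1 ?_
    intro S hS
    refine hB.2 _ (fun w => ?_)
    have hz : LinearMap.mulRight ℂ (∑ p ∈ S, (γ (m.l p.1)).l p.2) = 0 := by
      apply LinearMap.ext_on hnd2
      rintro x ⟨c, d, rfl⟩
      simp only [LinearMap.mulRight_apply, LinearMap.zero_apply]
      rw [Finset.mul_sum]
      have hterm : ∀ p ∈ S, ((γ c).r d) * ((γ (m.l p.1)).l p.2)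
          = ((γ (m.r c)).r d) * ((γ p.1).l p.2) := by
        intro p _
        rw [K1, m.compat, ← K1]
      rw [Finset.sum_congr rfl hterm, ← Finset.mul_sum, hS, mul_zero]
    simpa using DFunLike.congr_fun hz w
  -- construct R
  have hexR : ∀ m : Multiplier A, ∃ R : B →ₗ[ℂ] B, ∀ a b, R ((γ a).r b) = (γ (m.r a)).r b := by
    intro m
    refine liftAux (fun a => (γ a).r) (fun a => (γ (m.r a)).r) hradd
      (fun a a' => by
        show (γ (m.r (a + a'))).r = (γ (m.r a)).r + (γ (m.r a')).r
        rw [map_add, hradd]) hnd2 ?_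
    intro S hS
    refine hB.1 _ (fun w => ?_)
    have hz : LinearMap.mulLeft ℂ (∑ p ∈ S, (γ (m.r p.1)).r p.2) = 0 := by
      apply LinearMap.ext_on hnd1
      rintro x ⟨c, d, rfl⟩
      simp only [LinearMap.mulLeft_apply, LinearMap.zero_apply]
      rw [Finset.sum_mul]
      have hterm : ∀ p ∈ S, ((γ (m.r p.1)).r p.2) * ((γ c).l d)
          = ((γ p.1).r p.2) * ((γ (m.l c)).l d) := by
        intro p _
        rw [K2, ← m.compat, ← K2]
      rw [Finset.sum_congr rfl hterm, ← Finset.sum_mul, hS, zero_mul]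
    simpa using DFunLike.congr_fun hz w
  choose Lm hLm using hexL
  choose Rm hRm using hexR
  -- compatibility
  have hcompat : ∀ (m : Multiplier A) (x y : B), y * (Lm m) x = (Rm m) y * x := by
    intro m x y
    have hgen : ∀ (c : A) (d : B) (z : B),
        ((γ c).r d) * (Lm m) z = ((γ (m.r c)).r d) * z := by
      intro c d
      have h := LinearMap.ext_on hnd1
        (f := (LinearMap.mulLeft ℂ ((γ c).r d)).comp (Lm m))
        (g := LinearMap.mulLeft ℂ ((γ (m.r c)).r d)) ?_
      · intro z
        simpa using DFunLike.congr_fun h z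
      · rintro x ⟨a, b, rfl⟩
        simp only [LinearMap.comp_apply, LinearMap.mulLeft_apply]
        rw [hLm m a b, K1, m.compat, ← K1]
    have h2 := LinearMap.ext_on hnd2
      (f := LinearMap.mulRight ℂ ((Lm m) x))
      (g := (LinearMap.mulRight ℂ x).comp (Rm m)) ?_
    · simpa using DFunLike.congr_fun h2 y
    · rintro y ⟨c, d, rfl⟩
      simp only [LinearMap.comp_apply, LinearMap.mulRight_apply]
      rw [hgen c d x, hRm m c d]
  set Γ : Multiplier A → Multiplier B := fun m => ⟨Lm m, Rm m, hcompat m⟩ with hΓ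
  have hΓl : ∀ m : Multiplier A, (Γ m).l = Lm m := fun m => rfl
  have hΓr : ∀ m : Multiplier A, (Γ m).r = Rm m := fun m => rfl
  -- multiplier identities in M(A)
  have embl : ∀ (c : A) (m : Multiplier A), Multiplier.emb c * m = Multiplier.emb (m.r c) := by
    intro c m
    apply mult_ext
    · ext a
      exact m.compat a c
    · ext b
      show m.r (b * c) = b * m.r c
      have h : ∀ a, (m.r (b * c) - b * m.r c) * a = 0 := by
        intro a
        rw [sub_mul, ← m.compat, mul_assoc, m.compat, ← mul_assoc, sub_self]
      exact sub_eq_zero.1 (hA.1 _ h)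
  have embr : ∀ (c : A) (m : Multiplier A), m * Multiplier.emb c = Multiplier.emb (m.l c) := by
    intro c m
    apply mult_ext
    · ext a
      show m.l (c * a) = m.l c * a
      have h : ∀ b, b * (m.l (c * a) - m.l c * a) = 0 := by
        intro b
        rw [mul_sub, m.compat, ← mul_assoc, ← m.compat, mul_assoc, sub_self]
      exact sub_eq_zero.1 (hA.2 _ h)
    · ext b
      exact (m.compat c b).symm
  refine ⟨Γ, ⟨?_, ?_, ?_, ?_⟩, ?_⟩
  · -- additive
    intro x y
    apply mult_ext
    · refine LinearMap.ext_on hnd1 ?_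
      rintro _ ⟨a, b, rfl⟩
      show Lm (x + y) ((γ a).l b) = Lm x ((γ a).l b) + Lm y ((γ a).l b)
      rw [hLm, hLm, hLm]
      show (γ (x.l a + y.l a)).l b = _
      rw [hladd]; rfl
    · refine LinearMap.ext_on hnd2 ?_
      rintro _ ⟨a, b, rfl⟩
      show Rm (x + y) ((γ a).r b) = Rm x ((γ a).r b) + Rm y ((γ a).r b)
      rw [hRm, hRm, hRm]
      show (γ (x.r a + y.r a)).r b = _
      rw [hradd]; rfl
  · -- multiplicative
    intro x y
    apply mult_ext
    · refine LinearMap.ext_on hnd1 ?_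
      rintro _ ⟨a, b, rfl⟩
      show Lm (x * y) ((γ a).l b) = Lm x (Lm y ((γ a).l b))
      rw [hLm, hLm, hLm]
      rfl
    · refine LinearMap.ext_on hnd2 ?_
      rintro _ ⟨a, b, rfl⟩
      show Rm (x * y) ((γ a).r b) = Rm y (Rm x ((γ a).r b))
      rw [hRm, hRm, hRm]
      rfl
  · -- unital
    apply mult_ext
    · refine LinearMap.ext_on hnd1 ?_
      rintro _ ⟨a, b, rfl⟩
      show Lm 1 ((γ a).l b) = (γ a).l b
      rw [hLm]
      rfl
    · refine LinearMap.ext_on hnd2 ?_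
      rintro _ ⟨a, b, rfl⟩
      show Rm 1 ((γ a).r b) = (γ a).r b
      rw [hRm]
      rfl
  · -- extends γ
    intro c
    apply mult_ext
    · refine LinearMap.ext_on hnd1 ?_
      rintro _ ⟨a, b, rfl⟩
      show Lm (Multiplier.emb c) ((γ a).l b) = (γ c).l ((γ a).l b)
      rw [hLm]
      show (γ (c * a)).l b = _
      rw [hmul]
      rfl
    · refine LinearMap.ext_on hnd2 ?_
      rintro _ ⟨a, b, rfl⟩
      show Rm (Multiplier.emb c) ((γ a).r b) = (γ c).r ((γ a).r b)
      rw [hRm]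
      show (γ (a * c)).r b = _
      rw [hmul]
      rfl
  · -- uniqueness
    rintro δ ⟨hδadd, hδmul, hδone, hδemb⟩
    funext m
    apply mult_ext
    · refine LinearMap.ext_on hnd1 ?_
      rintro _ ⟨a, b, rfl⟩
      have h1 : (δ m).l ((γ a).l b) = (γ (m.l a)).l b := by
        calc (δ m).l ((γ a).l b) = (δ m).l ((δ (Multiplier.emb a)).l b) := by rw [hδemb]
          _ = (δ m * δ (Multiplier.emb a)).l b := rfl
          _ = (δ (m * Multiplier.emb a)).l b := by rw [hδmul]
          _ = (δ (Multiplier.emb (m.l a))).l b := by rw [embr]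
          _ = (γ (m.l a)).l b := by rw [hδemb]
      rw [h1]
      exact (hLm m a b).symm
    · refine LinearMap.ext_on hnd2 ?_
      rintro _ ⟨a, b, rfl⟩
      have h1 : (δ m).r ((γ a).r b) = (γ (m.r a)).r b := by
        calc (δ m).r ((γ a).r b) = (δ m).r ((δ (Multiplier.emb a)).r b) := by rw [hδemb]
          _ = (δ (Multiplier.emb a) * δ m).r b := rfl
          _ = (δ (Multiplier.emb a * m)).r b := by rw [hδmul]
          _ = (δ (Multiplier.emb (m.r a))).r b := by rw [embl]
          _ = (γ (m.r a)).r b := by rw [hδemb]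
      rw [h1]
      exact (hRm m a b).symm
end

section
/- Let A be a non-degenerate algebra and Δ: A → M(A⊗A) a homomorphism with Δ(A)(A⊗A) = A⊗A and (A⊗A)Δ(A) = A⊗A. If the canonical map T₁: a⊗b ↦ Δ(a)(1⊗b) has range contained in A⊗A, then A is idempotent, i.e. A² = A. -/
open scoped TensorProduct

/-- If `Δ : A → M(A⊗A)` is a non-degenerate homomorphism and the canonical map
`T₁ : a ⊗ b ↦ Δ(a)(1 ⊗ b)` has range in `A ⊗ A`, then `A` is idempotent: `A² = A`. -/
theorem statement8 {A : Type*}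
    [NonUnitalRing A] [Module ℂ A] [SMulCommClass ℂ A A] [IsScalarTower ℂ A A]
    (hA : NonDeg A)
    (Δ : A → Multiplier (A ⊗[ℂ] A))
    (hΔadd : ∀ a a' : A, Δ (a + a') = Δ a + Δ a')
    (hΔmul : ∀ a a' : A, Δ (a * a') = Δ a * Δ a')
    (hnd1 : Submodule.span ℂ {x : A ⊗[ℂ] A | ∃ (c : A) (u : A ⊗[ℂ] A), x = (Δ c).l u} = ⊤)
    (hnd2 : Submodule.span ℂ {x : A ⊗[ℂ] A | ∃ (c : A) (u : A ⊗[ℂ] A), x = (Δ c).r u} = ⊤)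
    -- T₁(a ⊗ b) = Δ(a)(1 ⊗ b) lies in A ⊗ A :
    (hT1 : ∀ a b : A, ∃ t : A ⊗[ℂ] A,
      (∀ u : A ⊗[ℂ] A, t * u =
        (Δ a).l ((TensorProduct.map LinearMap.id (LinearMap.mulLeft ℂ b)) u)) ∧
      (∀ u : A ⊗[ℂ] A, u * t =
        (TensorProduct.map LinearMap.id (LinearMap.mulRight ℂ b)) ((Δ a).r u))) :
    Submodule.span ℂ {x : A | ∃ a b : A, x = a * b} = ⊤ := by
    classical
  set M : Submodule ℂ A := Submodule.span ℂ {x : A | ∃ a b : A, x = a * b} with hM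
  by_cases hz : ∀ d b : A, d * b = 0
  · have hall : ∀ a : A, a = 0 := fun a => hA.1 a (hz a)
    rw [Submodule.eq_top_iff']
    intro x; rw [hall x]; exact M.zero_mem
  push_neg at hz
  obtain ⟨d, b, hdb⟩ := hz
  have hphi : ∃ φ : Module.Dual ℂ A, φ (d * b) ≠ 0 := by
    by_contra h
    push_neg at h
    exact hdb ((Module.forall_dual_apply_eq_zero_iff ℂ _).1 h)
  obtain ⟨φ, hφ⟩ := hphi
  set F : A ⊗[ℂ] A →ₗ[ℂ] (A ⧸ M) ⊗[ℂ] A := LinearMap.rTensor A M.mkQ with hF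
  have key1 : ∀ p q : A ⊗[ℂ] A, F (p * q) = 0 := by
    intro p q
    induction p using TensorProduct.induction_on with
    | zero => simp [zero_mul]
    | tmul x y =>
      induction q using TensorProduct.induction_on with
      | zero => simp [mul_zero]
      | tmul u v =>
        rw [Algebra.TensorProduct.tmul_mul_tmul]
        have hxu : (x * u) ∈ M := Submodule.subset_span ⟨x, u, rfl⟩
        rw [hF, LinearMap.rTensor_tmul]
        rw [show M.mkQ (x * u) = 0 from (Submodule.Quotient.mk_eq_zero M).2 hxu,
          TensorProduct.zero_tmul]
      | add q1 q2 h1 h2 => rw [mul_add, map_add, h1, h2, add_zero]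
    | add p1 p2 h1 h2 => rw [add_mul, map_add, h1, h2, add_zero]
  have key3 : ∀ (b' : A) (v : A ⊗[ℂ] A),
      F ((TensorProduct.map LinearMap.id (LinearMap.mulRight ℂ b')) v) = 0 := by
    intro b' v
    have hv : v ∈ Submodule.span ℂ {x : A ⊗[ℂ] A | ∃ (c : A) (u : A ⊗[ℂ] A), x = (Δ c).r u} := by
      rw [hnd2]; trivial
    induction hv using Submodule.span_induction with
    | mem x hx =>
      obtain ⟨c, u, rfl⟩ := hx
      obtain ⟨t, _, ht2⟩ := hT1 c b'
      rw [← ht2 u]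
      exact key1 u t
    | zero => simp
    | add x y _ _ hx hy => rw [map_add, map_add, hx, hy, add_zero]
    | smul s x _ hx => rw [map_smul, map_smul, hx, smul_zero]
  have key4 : ∀ c : A, (M.mkQ c) ⊗ₜ[ℂ] (d * b) = 0 := by
    intro c
    have h := key3 b (c ⊗ₜ d)
    rwa [TensorProduct.map_tmul, LinearMap.id_apply, LinearMap.mulRight_apply, hF,
      LinearMap.rTensor_tmul] at h
  rw [Submodule.eq_top_iff']
  intro c
  have h0 := congrArg (fun w => TensorProduct.rid ℂ (A ⧸ M) (LinearMap.lTensor (A ⧸ M) φ w)) (key4 c)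
  simp only [LinearMap.lTensor_tmul, map_zero, TensorProduct.rid_tmul] at h0
  rcases smul_eq_zero.1 h0 with h | h
  · exact absurd h hφ
  · exact (Submodule.Quotient.mk_eq_zero M).1 h
end

section
/- Let A be a non-degenerate algebra and Δ: A → M(A⊗A) a linear map such that both canonical maps T₁(a⊗b) = Δ(a)(1⊗b) and T₂(c⊗a) = (c⊗1)Δ(a) have range in A⊗A. If T₁ (or T₂) is surjective onto A⊗A, then A is idempotent. -/
open scoped TensorProduct

/-!
Non-degeneracy of `A` passes to `A ⊗ A`, so `Δ(a)` can be tested against elements of `A ⊗ A`.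
Doing so shows that `(c ⊗ 1) T₁(a ⊗ b)` and `T₂(c ⊗ a) (1 ⊗ b)` are both `(c ⊗ 1) Δ(a) (1 ⊗ b)`.
The right-hand side lies in `A ⊗ A²`, hence so does `(c ⊗ 1) T₁(A ⊗ A) = (c ⊗ 1)(A ⊗ A)`
when `T₁` is surjective. For `t ≠ 0` pick `c` with `c t ≠ 0`: then `c t ⊗ t ∈ A ⊗ A²` forces
`t ∈ A²`. Surjectivity of `T₂` is handled symmetrically.
-/

open TensorProduct LinearMap

section Free

variable {R M N P ι : Type*} [CommRing R] [AddCommGroup M] [Module R M] [AddCommGroup N]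
  [Module R N] [AddCommGroup P] [Module R P] [Module.Free R P]

theorem TensorProduct.eq_zero_of_forall_rTensor_eq_zero {f : ι → M →ₗ[R] N}
    (hf : ∀ m, (∀ i, f i m = 0) → m = 0) {x : M ⊗[R] P} (hx : ∀ i, (f i).rTensor P x = 0) :
    x = 0 := by
  classical
  let b := Module.Free.chooseBasis R P
  refine (equivFinsuppOfBasisRight b).map_eq_zero_iff.mp (Finsupp.ext fun j => hf _ fun i => ?_)
  have naturality : ∀ y : M ⊗[R] P,
      TensorProduct.rid R N ((b.coord j).lTensor N ((f i).rTensor P y)) =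
        f i (TensorProduct.rid R M ((b.coord j).lTensor M y)) := by
    intro y
    induction y using TensorProduct.induction_on <;> simp_all
  rw [equivFinsuppOfBasisRight_apply, ← naturality, hx i, map_zero, map_zero]

theorem TensorProduct.eq_zero_of_forall_lTensor_eq_zero {f : ι → M →ₗ[R] N}
    (hf : ∀ m, (∀ i, f i m = 0) → m = 0) {x : P ⊗[R] M} (hx : ∀ i, (f i).lTensor P x = 0) :
    x = 0 := by
  refine (TensorProduct.comm R P M).map_eq_zero_iff.mp
    (eq_zero_of_forall_rTensor_eq_zero hf fun i => ?_)
  rw [← comm_comp_lTensor_comp_comm_eq]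
  simp [hx]

end Free

theorem TensorProduct.eq_zero_of_tmul_eq_zero_left {K M N : Type*} [Field K] [AddCommGroup M]
    [Module K M] [AddCommGroup N] [Module K N] {m : M} (hm : m ≠ 0) {n : N}
    (h : m ⊗ₜ[K] n = 0) : n = 0 := by
  obtain ⟨φ, hφ⟩ := Module.Projective.exists_dual_ne_zero K hm
  have := congr(TensorProduct.lid K N (φ.rTensor N $h))
  simpa [hφ] using this

theorem TensorProduct.eq_zero_of_tmul_eq_zero_right {K M N : Type*} [Field K] [AddCommGroup M]
    [Module K M] [AddCommGroup N] [Module K N] {n : N} (hn : n ≠ 0) {m : M}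
    (h : m ⊗ₜ[K] n = 0) : m = 0 := by
  obtain ⟨φ, hφ⟩ := Module.Projective.exists_dual_ne_zero K hn
  have := congr(TensorProduct.rid K M (φ.lTensor M $h))
  simpa [hφ] using this

section TensorAlgebra

variable {R A B : Type*} [CommRing R] [NonUnitalRing A] [Module R A] [SMulCommClass R A A]
  [IsScalarTower R A A] [NonUnitalRing B] [Module R B] [SMulCommClass R B B]
  [IsScalarTower R B B]

theorem TensorProduct.tmul_mul_eq_map_mulLeft (c : A) (d : B) (w : A ⊗[R] B) :
    (c ⊗ₜ d) * w = map (mulLeft R c) (mulLeft R d) w := by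
  induction w using TensorProduct.induction_on with
  | zero => rw [mul_zero, map_zero]
  | tmul x y => rw [Algebra.TensorProduct.tmul_mul_tmul, map_tmul, mulLeft_apply, mulLeft_apply]
  | add u v hu hv => rw [mul_add, map_add, hu, hv]

theorem TensorProduct.mul_rTensor_mulLeft (c : A) (u v : A ⊗[R] B) :
    u * (mulLeft R c).rTensor B v = (mulRight R c).rTensor B u * v := by
  induction u using TensorProduct.induction_on with
  | zero => simp
  | add u₁ u₂ h₁ h₂ => simp [add_mul, h₁, h₂]
  | tmul p q =>
    induction v using TensorProduct.induction_on with
    | zero => simp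
    | add v₁ v₂ h₁ h₂ => simp [mul_add, h₁, h₂]
    | tmul x y => simp [mul_assoc]

theorem TensorProduct.mul_lTensor_mulRight (b : B) (u v : A ⊗[R] B) :
    u * (mulRight R b).lTensor A v = (mulRight R b).lTensor A (u * v) := by
  induction u using TensorProduct.induction_on with
  | zero => simp
  | add u₁ u₂ h₁ h₂ => simp [add_mul, h₁, h₂]
  | tmul p q =>
    induction v using TensorProduct.induction_on with
    | zero => simp
    | add v₁ v₂ h₁ h₂ => simp [mul_add, h₁, h₂]
    | tmul x y => simp [mul_assoc]

theorem TensorProduct.eq_zero_of_forall_tmul_mul_eq_zero [Module.Free R A] [Module.Free R B]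
    (hA : ∀ a' : A, (∀ a, a * a' = 0) → a' = 0) (hB : ∀ b' : B, (∀ b, b * b' = 0) → b' = 0)
    {w : A ⊗[R] B} (h : ∀ (a : A) (b : B), (a ⊗ₜ b) * w = 0) : w = 0 := by
  refine eq_zero_of_forall_lTensor_eq_zero (f := mulLeft R) hB fun b => ?_
  refine eq_zero_of_forall_rTensor_eq_zero (f := mulLeft R) hA fun a => ?_
  rw [← comp_apply, rTensor_comp_lTensor, ← tmul_mul_eq_map_mulLeft, h]

end TensorAlgebra

section Quotient

variable {R M A : Type*} [CommRing R] [AddCommGroup M] [Module R M] [NonUnitalRing A]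
  [Module R A] {V : Submodule R A}

theorem lTensor_mkQ_lTensor_mulRight [IsScalarTower R A A] (hV : ∀ a b : A, a * b ∈ V) (b : A)
    (z : M ⊗[R] A) :
    V.mkQ.lTensor M ((mulRight R b).lTensor M z) = 0 := by
  have hb : V.mkQ ∘ₗ mulRight R b = 0 :=
    ext fun a => (Submodule.Quotient.mk_eq_zero V).mpr (hV a b)
  rw [← comp_apply, ← lTensor_comp, hb, lTensor_zero, LinearMap.zero_apply]

theorem rTensor_mkQ_rTensor_mulLeft [SMulCommClass R A A] (hV : ∀ a b : A, a * b ∈ V) (a : A)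
    (z : A ⊗[R] M) :
    V.mkQ.rTensor M ((mulLeft R a).rTensor M z) = 0 := by
  have ha : V.mkQ ∘ₗ mulLeft R a = 0 :=
    ext fun b => (Submodule.Quotient.mk_eq_zero V).mpr (hV a b)
  rw [← comp_apply, ← rTensor_comp, ha, rTensor_zero, LinearMap.zero_apply]

end Quotient

section Field

variable {K A : Type*} [Field K] [NonUnitalRing A] [Module K A] {V : Submodule K A}

theorem Submodule.eq_top_of_forall_lTensor_mkQ_rTensor_mulLeft_eq_zero [SMulCommClass K A A]
    (hA : ∀ b : A, (∀ a, a * b = 0) → b = 0)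
    (h : ∀ (c : A) (w : A ⊗[K] A), V.mkQ.lTensor A ((mulLeft K c).rTensor A w) = 0) :
    V = ⊤ := by
  refine eq_top_iff'.mpr fun t => ?_
  by_cases ht : t = 0
  · exact ht ▸ V.zero_mem
  obtain ⟨c, hc⟩ : ∃ c, c * t ≠ 0 := by
    by_contra! hct
    exact ht (hA t hct)
  have := h c (t ⊗ₜ t)
  rw [rTensor_tmul, lTensor_tmul] at this
  exact (Submodule.Quotient.mk_eq_zero V).mp (eq_zero_of_tmul_eq_zero_left hc this)

theorem Submodule.eq_top_of_forall_rTensor_mkQ_lTensor_mulRight_eq_zero [IsScalarTower K A A]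
    (hA : ∀ a : A, (∀ b, a * b = 0) → a = 0)
    (h : ∀ (d : A) (w : A ⊗[K] A), V.mkQ.rTensor A ((mulRight K d).lTensor A w) = 0) :
    V = ⊤ := by
  refine eq_top_iff'.mpr fun t => ?_
  by_cases ht : t = 0
  · exact ht ▸ V.zero_mem
  obtain ⟨d, hd⟩ : ∃ d, t * d ≠ 0 := by
    by_contra! htd
    exact ht (hA t htd)
  have := h d (t ⊗ₜ t)
  rw [lTensor_tmul, rTensor_tmul] at this
  exact (Submodule.Quotient.mk_eq_zero V).mp (eq_zero_of_tmul_eq_zero_right hd this)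

end Field

section Comultiplication

variable {A : Type*} [NonUnitalRing A] [Module ℂ A] [SMulCommClass ℂ A A] [IsScalarTower ℂ A A]

theorem rTensor_mulLeft_T1_eq_lTensor_mulRight_T2 (hA : ∀ b : A, (∀ a, a * b = 0) → b = 0)
    (Δ : A → Multiplier (A ⊗[ℂ] A)) {T1 T2 : A ⊗[ℂ] A →ₗ[ℂ] A ⊗[ℂ] A}
    (hT1 : ∀ a b u, u * T1 (a ⊗ₜ b) = (mulRight ℂ b).lTensor A ((Δ a).r u))
    (hT2 : ∀ c a u, u * T2 (c ⊗ₜ a) = (Δ a).r ((mulRight ℂ c).rTensor A u)) (a b c : A) :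
    (mulLeft ℂ c).rTensor A (T1 (a ⊗ₜ b)) = (mulRight ℂ b).lTensor A (T2 (c ⊗ₜ a)) := by
  refine sub_eq_zero.mp (eq_zero_of_forall_tmul_mul_eq_zero hA hA fun c' d' => ?_)
  rw [mul_sub, sub_eq_zero, mul_rTensor_mulLeft, hT1, mul_lTensor_mulRight, hT2]

end Comultiplication

theorem statement9_general {A : Type*}
    [NonUnitalRing A] [Module ℂ A] [SMulCommClass ℂ A A] [IsScalarTower ℂ A A]
    (hA : NonDeg A)
    (Δ : A → Multiplier (A ⊗[ℂ] A))
    (T1 T2 : (A ⊗[ℂ] A) →ₗ[ℂ] (A ⊗[ℂ] A))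
    -- T₁(a ⊗ b) is the element Δ(a)(1 ⊗ b) of A ⊗ A :
    (hT1 : ∀ a b : A,
      (∀ u : A ⊗[ℂ] A, T1 (a ⊗ₜ[ℂ] b) * u =
        (Δ a).l ((TensorProduct.map LinearMap.id (LinearMap.mulLeft ℂ b)) u)) ∧
      (∀ u : A ⊗[ℂ] A, u * T1 (a ⊗ₜ[ℂ] b) =
        (TensorProduct.map LinearMap.id (LinearMap.mulRight ℂ b)) ((Δ a).r u)))
    -- T₂(c ⊗ a) is the element (c ⊗ 1)Δ(a) of A ⊗ A :
    (hT2 : ∀ c a : A,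
      (∀ u : A ⊗[ℂ] A, T2 (c ⊗ₜ[ℂ] a) * u =
        (TensorProduct.map (LinearMap.mulLeft ℂ c) LinearMap.id) ((Δ a).l u)) ∧
      (∀ u : A ⊗[ℂ] A, u * T2 (c ⊗ₜ[ℂ] a) =
        (Δ a).r ((TensorProduct.map (LinearMap.mulRight ℂ c) LinearMap.id) u)))
    (hsurj : Function.Surjective T1 ∨ Function.Surjective T2) :
    Submodule.span ℂ {x : A | ∃ a b : A, x = a * b} = ⊤ := by
  have hV : ∀ a b : A, a * b ∈ Submodule.span ℂ {x : A | ∃ a b : A, x = a * b} :=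
    fun a b => Submodule.subset_span ⟨a, b, rfl⟩
  have key := rTensor_mulLeft_T1_eq_lTensor_mulRight_T2 hA.2 Δ (fun a b => (hT1 a b).2)
    (fun c a => (hT2 c a).2)
  rcases hsurj with hT1surj | hT2surj
  · refine Submodule.eq_top_of_forall_lTensor_mkQ_rTensor_mulLeft_eq_zero hA.2 fun c w => ?_
    obtain ⟨u, rfl⟩ := hT1surj w
    induction u using TensorProduct.induction_on with
    | zero => simp
    | tmul a b => rw [key]; exact lTensor_mkQ_lTensor_mulRight hV b _
    | add u v hu hv => rw [map_add, map_add, map_add, hu, hv, add_zero]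
  · refine Submodule.eq_top_of_forall_rTensor_mkQ_lTensor_mulRight_eq_zero hA.1 fun d w => ?_
    obtain ⟨u, rfl⟩ := hT2surj w
    induction u using TensorProduct.induction_on with
    | zero => simp
    | tmul c a => rw [← key]; exact rTensor_mkQ_rTensor_mulLeft hV c _
    | add u v hu hv => rw [map_add, map_add, map_add, hu, hv, add_zero]

/-- If `Δ : A → M(A⊗A)` is a linear map whose canonical maps `T₁` and `T₂` have range in
`A ⊗ A`, and `T₁` or `T₂` is surjective onto `A ⊗ A`, then `A` is idempotent. -/
theorem statement9 {A : Type*}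
    [NonUnitalRing A] [Module ℂ A] [SMulCommClass ℂ A A] [IsScalarTower ℂ A A]
    (hA : NonDeg A)
    (Δ : A → Multiplier (A ⊗[ℂ] A))
    (hΔadd : ∀ a a' : A, Δ (a + a') = Δ a + Δ a')
    (hΔsmul : ∀ (s : ℂ) (a : A), Δ (s • a) = s • Δ a)
    (T1 T2 : (A ⊗[ℂ] A) →ₗ[ℂ] (A ⊗[ℂ] A))
    -- T₁(a ⊗ b) is the element Δ(a)(1 ⊗ b) of A ⊗ A :
    (hT1 : ∀ a b : A,
      (∀ u : A ⊗[ℂ] A, T1 (a ⊗ₜ[ℂ] b) * u =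
        (Δ a).l ((TensorProduct.map LinearMap.id (LinearMap.mulLeft ℂ b)) u)) ∧
      (∀ u : A ⊗[ℂ] A, u * T1 (a ⊗ₜ[ℂ] b) =
        (TensorProduct.map LinearMap.id (LinearMap.mulRight ℂ b)) ((Δ a).r u)))
    -- T₂(c ⊗ a) is the element (c ⊗ 1)Δ(a) of A ⊗ A :
    (hT2 : ∀ c a : A,
      (∀ u : A ⊗[ℂ] A, T2 (c ⊗ₜ[ℂ] a) * u =
        (TensorProduct.map (LinearMap.mulLeft ℂ c) LinearMap.id) ((Δ a).l u)) ∧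
      (∀ u : A ⊗[ℂ] A, u * T2 (c ⊗ₜ[ℂ] a) =
        (Δ a).r ((TensorProduct.map (LinearMap.mulRight ℂ c) LinearMap.id) u)))
    (hsurj : Function.Surjective T1 ∨ Function.Surjective T2) :
    Submodule.span ℂ {x : A | ∃ a b : A, x = a * b} = ⊤ :=
  statement9_general hA Δ T1 T2 hT1 hT2 hsurj
end

section
/- Let A be a non-degenerate algebra and Δ: A → M(A⊗A) a homomorphism whose canonical maps T₁ and T₂ are both bijections from A⊗A onto A⊗A. Then Δ is non-degenerate: Δ(A)(A⊗A) = A⊗A and (A⊗A)Δ(A) = A⊗A. In particular the coproduct of a multiplier Hopf algebra is non-degenerate. -/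
open scoped TensorProduct

/-!
Write `c ⊗ 1` and `1 ⊗ q` for the one-sided multiplications on `A ⊗ A`, which is non-degenerate
because `A` is. Multiplying on the right shows
`(c ⊗ 1) T₁(p ⊗ q) = (c ⊗ 1) Δ(p) (1 ⊗ q) = T₂(c ⊗ p) (1 ⊗ q)`, so surjectivity of `T₁` gives
`(c ⊗ 1)(A ⊗ A) ⊆ A ⊗ A²`. Applied to `c ⊗ b` with `ac ≠ 0` this yields `A² = A`, hence
`(A ⊗ A)² = A ⊗ A`. Finally `(A ⊗ A)(A ⊗ A) = T₁(A ⊗ A)(A ⊗ A) ⊆ Δ(A)(A ⊗ A)`, and symmetrically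
`(A ⊗ A)(A ⊗ A) ⊆ (A ⊗ A)Δ(A)` using `T₂`.
-/

open TensorProduct LinearMap

section

variable {R K U V W : Type*}

theorem TensorProduct.apply_mem_of_surjective_of_tmul {M P Q S : Type*} [CommSemiring R]
    [AddCommMonoid M] [Module R M] [AddCommMonoid P] [Module R P] [AddCommMonoid Q]
    [Module R Q] [AddCommMonoid S] [Module R S] {T : M ⊗[R] P →ₗ[R] Q}
    (hT : Function.Surjective T) (g : Q →ₗ[R] S) {N : Submodule R S}
    (h : ∀ m p, g (T (m ⊗ₜ p)) ∈ N) (v : Q) : g v ∈ N := by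
  obtain ⟨t, rfl⟩ := hT v
  induction t with
  | zero => simp
  | tmul m p => exact h m p
  | add t₁ t₂ h₁ h₂ => rw [map_add, map_add]; exact N.add_mem h₁ h₂

theorem TensorProduct.equivFinsuppOfBasisLeft_lTensor_apply [CommSemiring R]
    [AddCommMonoid U] [Module R U] [AddCommMonoid V] [Module R V]
    [AddCommMonoid W] [Module R W] {ι : Type*} [DecidableEq ι] (b : Module.Basis ι R U)
    (f : V →ₗ[R] W) (z : U ⊗[R] V) (i : ι) :
    equivFinsuppOfBasisLeft b (lTensor U f z) i = f (equivFinsuppOfBasisLeft b z i) := by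
  induction z with
  | zero => simp
  | tmul u v => simp
  | add z₁ z₂ h₁ h₂ => simp only [map_add, Finsupp.add_apply, h₁, h₂]

section VectorSpace

variable [Field K] [AddCommGroup U] [Module K U] [AddCommGroup V] [Module K V]
  [AddCommGroup W] [Module K W]

theorem TensorProduct.eq_zero_of_forall_lTensor_eq_zero_s10 {ι : Type*} (f : ι → V →ₗ[K] W)
    (hf : ∀ v, (∀ i, f i v = 0) → v = 0) {x : U ⊗[K] V}
    (hx : ∀ i, lTensor U (f i) x = 0) : x = 0 := by
  classical
  let e := equivFinsuppOfBasisLeft (Module.Basis.ofVectorSpace K U) (N := V)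
  refine e.map_eq_zero_iff.1 (Finsupp.ext fun j => hf _ fun i => ?_)
  rw [← equivFinsuppOfBasisLeft_lTensor_apply, hx, map_zero, Finsupp.zero_apply]

theorem TensorProduct.eq_zero_of_forall_rTensor_eq_zero_s10 {ι : Type*} (f : ι → V →ₗ[K] W)
    (hf : ∀ v, (∀ i, f i v = 0) → v = 0) {x : V ⊗[K] U}
    (hx : ∀ i, rTensor U (f i) x = 0) : x = 0 := by
  refine (TensorProduct.comm K V U).map_eq_zero_iff.1
    (eq_zero_of_forall_lTensor_eq_zero_s10 f hf fun i => ?_)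
  rw [lTensor_comm, hx, map_zero]

theorem TensorProduct.mem_range_of_tmul_mem_range_lTensor {P : Type*} [AddCommGroup P]
    [Module K P] {f : P →ₗ[K] V} {a : U} (ha : a ≠ 0) {b : V}
    (h : a ⊗ₜ b ∈ range (lTensor U f)) : b ∈ range f := by
  obtain ⟨φ, hφ⟩ := Module.Projective.exists_dual_eq_one K ha
  have hnat : ∀ x : U ⊗[K] P, f (TensorProduct.lid K P (rTensor P φ x))
      = TensorProduct.lid K V (rTensor V φ (lTensor U f x)) := by
    intro x
    induction x with
    | zero => simp
    | tmul u p => simp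
    | add x₁ x₂ h₁ h₂ => simp only [map_add, h₁, h₂]
  obtain ⟨x, hx⟩ := h
  exact ⟨_, by rw [hnat, hx]; simp [hφ]⟩

end VectorSpace

section NonUnitalSemiring

variable {A B C : Type*} [CommSemiring R] [NonUnitalSemiring A] [Module R A]
  [SMulCommClass R A A] [IsScalarTower R A A] [NonUnitalSemiring B] [Module R B]
  [SMulCommClass R B B] [IsScalarTower R B B]

theorem TensorProduct.mul_tmul_eq_map (z : A ⊗[R] B) (c : A) (d : B) :
    z * c ⊗ₜ d = map (mulRight R c) (mulRight R d) z := by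
  induction z with
  | zero => simp
  | tmul a b => simp
  | add z₁ z₂ h₁ h₂ => rw [add_mul, map_add, h₁, h₂]

theorem TensorProduct.rTensor_mulLeft_mul (c : A) (z u : A ⊗[R] B) :
    rTensor B (mulLeft R c) z * u = rTensor B (mulLeft R c) (z * u) := by
  induction z with
  | zero => simp
  | tmul a b =>
    induction u with
    | zero => simp
    | tmul a' b' => simp [mul_assoc]
    | add u₁ u₂ h₁ h₂ => rw [mul_add, mul_add, map_add, h₁, h₂]
  | add z₁ z₂ h₁ h₂ => rw [map_add, add_mul, add_mul, map_add, h₁, h₂]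

theorem TensorProduct.lTensor_mulRight_mul (q : B) (z u : A ⊗[R] B) :
    lTensor A (mulRight R q) z * u = z * lTensor A (mulLeft R q) u := by
  induction z with
  | zero => simp
  | tmul a b =>
    induction u with
    | zero => simp
    | tmul a' b' => simp [mul_assoc]
    | add u₁ u₂ h₁ h₂ => rw [map_add, mul_add, mul_add, h₁, h₂]
  | add z₁ z₂ h₁ h₂ => rw [map_add, add_mul, add_mul, h₁, h₂]

omit [SMulCommClass R B B] [IsScalarTower R B B] in
theorem LinearMap.lTensor_mulRight_mem_range_lTensor_mul' (q : A) (z : B ⊗[R] A) :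
    lTensor B (mulRight R q) z ∈ range (lTensor B (mul' R A)) := by
  have : mulRight R q = mul' R A ∘ₗ (TensorProduct.mk R A A).flip q := by ext; simp
  rw [this, lTensor_comp]
  exact mem_range_self _ _

theorem LinearMap.mul'_surjective_tensorProduct (hA : Function.Surjective (mul' R A))
    (hB : Function.Surjective (mul' R B)) : Function.Surjective (mul' R (A ⊗[R] B)) := by
  have h : mul' R (A ⊗[R] B) ∘ₗ tensorTensorTensorComm R A A B B
      = map (mul' R A) (mul' R B) := by ext; simp
  intro z
  obtain ⟨t, rfl⟩ := TensorProduct.map_surjective hA hB z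
  exact ⟨tensorTensorTensorComm R A A B B t, by rw [← h]; rfl⟩

theorem Submodule.eq_top_of_forall_mul_mem [NonUnitalNonAssocSemiring C]
    [Module R C] [SMulCommClass R C C] [IsScalarTower R C C]
    (hC : Function.Surjective (mul' R C)) {N : Submodule R C} (h : ∀ x y : C, x * y ∈ N) :
    N = ⊤ := by
  refine eq_top_iff'.2 fun z => ?_
  obtain ⟨t, rfl⟩ := hC z
  induction t with
  | zero => simp
  | tmul x y => exact h x y
  | add t₁ t₂ h₁ h₂ => rw [map_add]; exact N.add_mem h₁ h₂

end NonUnitalSemiring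

section Field

variable {A B : Type*} [Field K] [NonUnitalRing A] [Module K A] [SMulCommClass K A A]
  [IsScalarTower K A A] [NonUnitalRing B] [Module K B] [SMulCommClass K B B]
  [IsScalarTower K B B]

theorem TensorProduct.eq_zero_of_forall_mul_eq_zero (hA : ∀ a : A, (∀ c, a * c = 0) → a = 0)
    (hB : ∀ b : B, (∀ d, b * d = 0) → b = 0) {x : A ⊗[K] B} (hx : ∀ u, x * u = 0) :
    x = 0 := by
  refine eq_zero_of_forall_rTensor_eq_zero_s10 (fun c => mulRight K c) hA fun c => ?_
  refine eq_zero_of_forall_lTensor_eq_zero_s10 (fun d => mulRight K d) hB fun d => ?_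
  rw [← LinearMap.comp_apply, lTensor_comp_rTensor, ← mul_tmul_eq_map, hx]

/-- Both sides are `(c ⊗ 1) L (1 ⊗ q)`, as seen by multiplying them on the right. -/
theorem TensorProduct.rTensor_mulLeft_eq_lTensor_mulRight
    (hA : ∀ a : A, (∀ c, a * c = 0) → a = 0) (hB : ∀ b : B, (∀ d, b * d = 0) → b = 0)
    {c : A} {q : B} {x y : A ⊗[K] B} {L : A ⊗[K] B →ₗ[K] A ⊗[K] B}
    (hx : ∀ u, x * u = L (lTensor A (mulLeft K q) u))
    (hy : ∀ u, y * u = rTensor B (mulLeft K c) (L u)) :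
    rTensor B (mulLeft K c) x = lTensor A (mulRight K q) y := by
  refine sub_eq_zero.1 (eq_zero_of_forall_mul_eq_zero hA hB fun u => ?_)
  rw [sub_mul, rTensor_mulLeft_mul, lTensor_mulRight_mul, hx, hy, sub_self]

theorem LinearMap.mul'_surjective_of_tmul_mem_range (hA : ∀ a : A, (∀ c, a * c = 0) → a = 0)
    (h : ∀ a c b : A, (a * c) ⊗ₜ[K] b ∈ range (lTensor A (mul' K A))) :
    Function.Surjective (mul' K A) := by
  intro b
  by_contra hb
  have hzero : ∀ a : A, a = 0 := fun a => hA a fun c => by_contra fun hac =>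
    hb (mem_range.1 (mem_range_of_tmul_mem_range_lTensor hac (h a c b)))
  exact hb ⟨0, by rw [map_zero, hzero b]⟩

end Field

end

theorem statement10_general {A : Type*}
    [NonUnitalRing A] [Module ℂ A] [SMulCommClass ℂ A A] [IsScalarTower ℂ A A]
    (hA : NonDeg A)
    (Δ : A → Multiplier (A ⊗[ℂ] A))
    (T1 T2 : (A ⊗[ℂ] A) →ₗ[ℂ] (A ⊗[ℂ] A))
    (hT1 : ∀ a b : A,
      (∀ u : A ⊗[ℂ] A, T1 (a ⊗ₜ[ℂ] b) * u =
        (Δ a).l ((TensorProduct.map LinearMap.id (LinearMap.mulLeft ℂ b)) u)) ∧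
      (∀ u : A ⊗[ℂ] A, u * T1 (a ⊗ₜ[ℂ] b) =
        (TensorProduct.map LinearMap.id (LinearMap.mulRight ℂ b)) ((Δ a).r u)))
    (hT2 : ∀ c a : A,
      (∀ u : A ⊗[ℂ] A, T2 (c ⊗ₜ[ℂ] a) * u =
        (TensorProduct.map (LinearMap.mulLeft ℂ c) LinearMap.id) ((Δ a).l u)) ∧
      (∀ u : A ⊗[ℂ] A, u * T2 (c ⊗ₜ[ℂ] a) =
        (Δ a).r ((TensorProduct.map (LinearMap.mulRight ℂ c) LinearMap.id) u)))
    (hbij1 : Function.Bijective T1) (hbij2 : Function.Bijective T2) :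
    Submodule.span ℂ {x : A ⊗[ℂ] A | ∃ (c : A) (u : A ⊗[ℂ] A), x = (Δ c).l u} = ⊤ ∧
    Submodule.span ℂ {x : A ⊗[ℂ] A | ∃ (c : A) (u : A ⊗[ℂ] A), x = (Δ c).r u} = ⊤ := by
  have hcomm : ∀ c p q : A, rTensor A (mulLeft ℂ c) (T1 (p ⊗ₜ q))
      = lTensor A (mulRight ℂ q) (T2 (c ⊗ₜ p)) := fun c p q =>
    rTensor_mulLeft_eq_lTensor_mulRight hA.1 hA.1 (hT1 p q).1 (hT2 c p).1
  have hmulA : Function.Surjective (mul' ℂ A) :=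
    mul'_surjective_of_tmul_mem_range hA.1 fun a c b => by
      rw [← mulLeft_apply (R := ℂ), ← rTensor_tmul]
      refine apply_mem_of_surjective_of_tmul hbij1.2 _ (fun p q => ?_) _
      rw [hcomm]
      exact lTensor_mulRight_mem_range_lTensor_mul' q _
  have hmulAA := mul'_surjective_tensorProduct hmulA hmulA
  constructor
  · refine Submodule.eq_top_of_forall_mul_mem hmulAA fun v u =>
      apply_mem_of_surjective_of_tmul hbij1.2 ((mul ℂ _).flip u) (fun p q => ?_) v
    rw [flip_apply, mul_apply', (hT1 p q).1]
    exact Submodule.subset_span ⟨p, _, rfl⟩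
  · refine Submodule.eq_top_of_forall_mul_mem hmulAA fun v u =>
      apply_mem_of_surjective_of_tmul hbij2.2 (mul ℂ _ v) (fun c p => ?_) u
    rw [mul_apply', (hT2 c p).2]
    exact Submodule.subset_span ⟨p, _, rfl⟩

/-- If `Δ : A → M(A⊗A)` is a homomorphism whose canonical maps `T₁` and `T₂` are
bijections of `A ⊗ A`, then `Δ` is non-degenerate: `Δ(A)(A⊗A) = A⊗A` and
`(A⊗A)Δ(A) = A⊗A`. In particular the coproduct of a multiplier Hopf algebra is
non-degenerate. -/
theorem statement10 {A : Type*}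
    [NonUnitalRing A] [Module ℂ A] [SMulCommClass ℂ A A] [IsScalarTower ℂ A A]
    (hA : NonDeg A)
    (Δ : A → Multiplier (A ⊗[ℂ] A))
    (hΔadd : ∀ a a' : A, Δ (a + a') = Δ a + Δ a')
    (hΔmul : ∀ a a' : A, Δ (a * a') = Δ a * Δ a')
    (T1 T2 : (A ⊗[ℂ] A) →ₗ[ℂ] (A ⊗[ℂ] A))
    (hT1 : ∀ a b : A,
      (∀ u : A ⊗[ℂ] A, T1 (a ⊗ₜ[ℂ] b) * u =
        (Δ a).l ((TensorProduct.map LinearMap.id (LinearMap.mulLeft ℂ b)) u)) ∧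
      (∀ u : A ⊗[ℂ] A, u * T1 (a ⊗ₜ[ℂ] b) =
        (TensorProduct.map LinearMap.id (LinearMap.mulRight ℂ b)) ((Δ a).r u)))
    (hT2 : ∀ c a : A,
      (∀ u : A ⊗[ℂ] A, T2 (c ⊗ₜ[ℂ] a) * u =
        (TensorProduct.map (LinearMap.mulLeft ℂ c) LinearMap.id) ((Δ a).l u)) ∧
      (∀ u : A ⊗[ℂ] A, u * T2 (c ⊗ₜ[ℂ] a) =
        (Δ a).r ((TensorProduct.map (LinearMap.mulRight ℂ c) LinearMap.id) u)))
    (hbij1 : Function.Bijective T1) (hbij2 : Function.Bijective T2) :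
    Submodule.span ℂ {x : A ⊗[ℂ] A | ∃ (c : A) (u : A ⊗[ℂ] A), x = (Δ c).l u} = ⊤ ∧
    Submodule.span ℂ {x : A ⊗[ℂ] A | ∃ (c : A) (u : A ⊗[ℂ] A), x = (Δ c).r u} = ⊤ :=
  statement10_general hA Δ T1 T2 hT1 hT2 hbij1 hbij2
end

section
/- Let Δ: A → M(A⊗A) be a weakly non-degenerate homomorphism with canonical idempotent E. Then E satisfies EΔ(a) = Δ(a) = Δ(a)E for all a ∈ A, and E is the smallest such idempotent: if F ∈ M(A⊗A) is idempotent with FΔ(a) = Δ(a) = Δ(a)F for all a, then EF = E = FE. -/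
open scoped TensorProduct

/-- For a weakly non-degenerate homomorphism `Δ : A → M(A⊗A)` with canonical idempotent
`E`, one has `E Δ(a) = Δ(a) = Δ(a) E` for all `a`, and `E` is the smallest idempotent
with this property. -/
theorem statement11 {A : Type*}
    [NonUnitalRing A] [Module ℂ A] [SMulCommClass ℂ A A] [IsScalarTower ℂ A A]
    (hA : NonDeg A) (hT : NonDeg (A ⊗[ℂ] A))
    (Δ : A → Multiplier (A ⊗[ℂ] A))
    (hΔadd : ∀ a a' : A, Δ (a + a') = Δ a + Δ a')
    (hΔmul : ∀ a a' : A, Δ (a * a') = Δ a * Δ a')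
    (E : Multiplier (A ⊗[ℂ] A)) (hE : E * E = E)
    -- Δ(A)(A⊗A) = E(A⊗A) and (A⊗A)Δ(A) = (A⊗A)E :
    (hw1 : Submodule.span ℂ {x : A ⊗[ℂ] A | ∃ (c : A) (u : A ⊗[ℂ] A), x = (Δ c).l u} =
      LinearMap.range E.l)
    (hw2 : Submodule.span ℂ {x : A ⊗[ℂ] A | ∃ (c : A) (u : A ⊗[ℂ] A), x = (Δ c).r u} =
      LinearMap.range E.r) :
    (∀ a : A, E * Δ a = Δ a ∧ Δ a * E = Δ a) ∧
    (∀ F : Multiplier (A ⊗[ℂ] A), F * F = F →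
      (∀ a : A, F * Δ a = Δ a ∧ Δ a * F = Δ a) → E * F = E ∧ F * E = E) := by
  -- multiplier extensionality
  have mulext : ∀ x y : Multiplier (A ⊗[ℂ] A),
      (∀ u, x.l u = y.l u) → (∀ u, x.r u = y.r u) → x = y := by
    rintro ⟨xl, xr, _⟩ ⟨yl, yr, _⟩ h1 h2
    simp only [Multiplier.mk.injEq]
    exact ⟨LinearMap.ext h1, LinearMap.ext h2⟩
  -- cancellation from non-degeneracy
  have hLc : ∀ x y : A ⊗[ℂ] A, (∀ v, x * v = y * v) → x = y := by
    intro x y h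
    exact sub_eq_zero.mp (hT.1 (x - y) fun v => by rw [sub_mul, h v, sub_self])
  have hRc : ∀ x y : A ⊗[ℂ] A, (∀ v, v * x = v * y) → x = y := by
    intro x y h
    exact sub_eq_zero.mp (hT.2 (x - y) fun v => by rw [mul_sub, h v, sub_self])
  -- E fixes its ranges
  have hEll : ∀ y, E.l (E.l y) = E.l y := fun y =>
    LinearMap.congr_fun (congrArg Multiplier.l hE) y
  have hErr : ∀ y, E.r (E.r y) = E.r y := fun y =>
    LinearMap.congr_fun (congrArg Multiplier.r hE) y
  have hDl : ∀ c u, E.l ((Δ c).l u) = (Δ c).l u := by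
    intro c u
    have hm : (Δ c).l u ∈ LinearMap.range E.l := by
      rw [← hw1]; exact Submodule.subset_span ⟨c, u, rfl⟩
    obtain ⟨y, hy⟩ := hm
    rw [← hy, hEll]
  have hDr : ∀ c u, E.r ((Δ c).r u) = (Δ c).r u := by
    intro c u
    have hm : (Δ c).r u ∈ LinearMap.range E.r := by
      rw [← hw2]; exact Submodule.subset_span ⟨c, u, rfl⟩
    obtain ⟨y, hy⟩ := hm
    rw [← hy, hErr]
  constructor
  · intro a
    constructor
    · apply mulext
      · intro u; exact hDl a u
      · intro u
        apply hLc; intro v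
        calc (Δ a).r (E.r u) * v = E.r u * (Δ a).l v := ((Δ a).compat v (E.r u)).symm
          _ = u * E.l ((Δ a).l v) := (E.compat ((Δ a).l v) u).symm
          _ = u * (Δ a).l v := by rw [hDl a v]
          _ = (Δ a).r u * v := (Δ a).compat v u
    · apply mulext
      · intro u
        apply hRc; intro v
        calc v * (Δ a).l (E.l u) = (Δ a).r v * E.l u := (Δ a).compat (E.l u) v
          _ = E.r ((Δ a).r v) * u := E.compat u ((Δ a).r v)
          _ = (Δ a).r v * u := by rw [hDr a v]
          _ = v * (Δ a).l u := ((Δ a).compat u v).symm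
      · intro u; exact hDr a u
  · intro F hF hFa
    have hFl : ∀ c u, F.l ((Δ c).l u) = (Δ c).l u := fun c u =>
      LinearMap.congr_fun (congrArg Multiplier.l (hFa c).1) u
    have hFr : ∀ c u, F.r ((Δ c).r u) = (Δ c).r u := fun c u =>
      LinearMap.congr_fun (congrArg Multiplier.r (hFa c).2) u
    have hFlE : ∀ x ∈ LinearMap.range E.l, F.l x = x := by
      rw [← hw1]
      intro x hx
      induction hx using Submodule.span_induction with
      | mem x hx => obtain ⟨c, u, rfl⟩ := hx; exact hFl c u
      | zero => simp
      | add x y _ _ hx hy => rw [map_add, hx, hy]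
      | smul s x _ hx => rw [map_smul, hx]
    have hFrE : ∀ x ∈ LinearMap.range E.r, F.r x = x := by
      rw [← hw2]
      intro x hx
      induction hx using Submodule.span_induction with
      | mem x hx => obtain ⟨c, u, rfl⟩ := hx; exact hFr c u
      | zero => simp
      | add x y _ _ hx hy => rw [map_add, hx, hy]
      | smul s x _ hx => rw [map_smul, hx]
    constructor
    · apply mulext
      · intro u
        apply hRc; intro v
        calc v * E.l (F.l u) = E.r v * F.l u := E.compat (F.l u) v
          _ = F.r (E.r v) * u := F.compat u (E.r v)
          _ = E.r v * u := by rw [hFrE (E.r v) ⟨v, rfl⟩]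
          _ = v * E.l u := (E.compat u v).symm
      · intro u; exact hFrE (E.r u) ⟨u, rfl⟩
    · apply mulext
      · intro u; exact hFlE (E.l u) ⟨u, rfl⟩
      · intro u
        apply hLc; intro v
        calc E.r (F.r u) * v = F.r u * E.l v := (E.compat v (F.r u)).symm
          _ = u * F.l (E.l v) := (F.compat (E.l v) u).symm
          _ = u * E.l v := by rw [hFlE (E.l v) ⟨v, rfl⟩]
          _ = E.r u * v := E.compat v u
end

section
/- In the setting of an admissible pairing of non-degenerate algebras A and B, if A is idempotent (A² = A), then the actions of A on B are non-degenerate: if b ∈ B satisfies a▷b = 0 for all a ∈ A, then b = 0 (and similarly for the right action). -/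
open scoped TensorProduct

/-- In an admissible pairing of non-degenerate algebras, if `A` is idempotent then the
actions of `A` on `B` are non-degenerate. -/
theorem statement14 {A B : Type*}
    [NonUnitalRing A] [Module ℂ A] [NonUnitalRing B] [Module ℂ B]
    (hA : NonDeg A) (hB : NonDeg B)
    (p : A →ₗ[ℂ] B →ₗ[ℂ] ℂ)
    (hp1 : ∀ a : A, (∀ b : B, p a b = 0) → a = 0)
    (hp2 : ∀ b : B, (∀ a : A, p a b = 0) → b = 0)
    (aL : A → B → A)  -- a ◁ b
    (aR : B → A → A)  -- b ▷ a
    (bL : A → B → B)  -- a ▷ b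
    (bR : B → A → B)  -- b ◁ a
    (h1 : ∀ (a : A) (b b' : B), p a (b * b') = p (aL a b) b')
    (h2 : ∀ (a : A) (b b' : B), p a (b' * b) = p (aR b a) b')
    (h3 : ∀ (a a' : A) (b : B), p (a' * a) b = p a' (bL a b))
    (h4 : ∀ (a a' : A) (b : B), p (a * a') b = p a' (bR b a))
    (hidem : Submodule.span ℂ {x : A | ∃ a b : A, x = a * b} = ⊤) :
    (∀ b : B, (∀ a : A, bL a b = 0) → b = 0) ∧
    (∀ b : B, (∀ a : A, bR b a = 0) → b = 0) := by
  constructor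
  · intro b hb
    apply hp2
    intro a
    have ha : a ∈ Submodule.span ℂ {x : A | ∃ a b : A, x = a * b} := by
      rw [hidem]; trivial
    induction ha using Submodule.span_induction with
    | mem x hx =>
      obtain ⟨u, v, rfl⟩ := hx
      rw [h3, hb v]
      simp
    | zero => simp
    | add x y _ _ hx hy => simp [hx, hy]
    | smul c x _ hx => simp [hx]
  · intro b hb
    apply hp2
    intro a
    have ha : a ∈ Submodule.span ℂ {x : A | ∃ a b : A, x = a * b} := by
      rw [hidem]; trivial
    induction ha using Submodule.span_induction with
    | mem x hx =>
      obtain ⟨u, v, rfl⟩ := hx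
      rw [h4, hb u]
      simp
    | zero => simp
    | add x y _ _ hx hy => simp [hx, hy]
    | smul c x _ hx => simp [hx]
end
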